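/- Let U → X → Y1 → Y2 be a Markov chain of {0,1}-valued random variables with Y1 = X ⊕ Ψ1, Y2 = Y1 ⊕ Ψ̃2, where Ψ1 ~ Bern(p1), Ψ̃2 ~ Bern(p̃2) are independent of everything else, 0 < p1, p̃2 < 1/2, p2 := p1 ∗ p̃2, and E[X] = α. Then there exists τ ∈ [0, α] such that I(X;Y1|U) ≤ h_b(τ ∗ p1) − h_b(p1) and I(U;Y2) ≤ h_b(α ∗ p2) − h_b(τ ∗ p2). -/

import Mathlib

/-!
Conditionally on `U = u` the input is Bernoulli with mean `γ_u`, so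
`I(X;Y₁|U) = ∑_u P_u h(γ_u ∗ p₁) - h(p₁)` and `I(U;Y₂) = h(α ∗ p₂) - ∑_u P_u h(γ_u ∗ p₂)`.
The average `∑_u P_u h(γ_u ∗ p₂)` lies between `h(p₂)` and, by concavity of `h`, `h(α ∗ p₂)`;
the intermediate value theorem gives `τ ∈ [0, α]` with `h(τ ∗ p₂)` equal to it, which makes the
second bound an equality. As `p₂ = p₁ ∗ p̃₂`, Mrs. Gerber's Lemma for the crossover probability
`p̃₂` turns this equality into `∑_u P_u h(γ_u ∗ p₁) ≤ h(τ ∗ p₁)`, the first bound.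

Mrs. Gerber's Lemma follows from a tangent-line inequality: `s ↦ h(s ∗ q) - c h(s)` with
`c = (1 - 2q) h'(σ ∗ q) / h'(σ)` is minimal at `σ`, because `h'(s ∗ q) / h'(s)` increases on
`(0, 1/2)`; that in turn is the concavity of `x (1 - x) h'(x)` on `(0, 1/2]`.
-/

open Finset

/-- Binary entropy function (natural logarithm). -/
noncomputable def binEnt (q : ℝ) : ℝ := -q * Real.log q - (1 - q) * Real.log (1 - q)

/-- Binary convolution `a ∗ b = a(1-b) + b(1-a)`. -/
def bconv (a b : ℝ) : ℝ := a * (1 - b) + b * (1 - a)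

/-- Mutual information `I(P, W)` of an input distribution `P` through the channel `W`. -/
noncomputable def mutInfo {X Z : Type*} [Fintype X] [Fintype Z]
    (P : X → ℝ) (W : X → Z → ℝ) : ℝ :=
  ∑ x, ∑ z, P x * W x z * Real.log (W x z / (∑ x', P x' * W x' z))

/-- Conditional mutual information `I(X;Y|U)` for a joint distribution `p` of `(U,X)`
and channel `W`. -/
noncomputable def condMI {U X Z : Type*} [Fintype U] [Fintype X] [Fintype Z]
    (p : U → X → ℝ) (W : X → Z → ℝ) : ℝ :=
  ∑ u, (∑ x, p u x) * mutInfo (fun x => p u x / ∑ x', p u x') W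

/-- Mutual information `I(U;Y)` where `Y` is the output of channel `V` on input `X`
and `p` is the joint distribution of `(U,X)`. -/
noncomputable def miUY {U X Y : Type*} [Fintype U] [Fintype X] [Fintype Y]
    (p : U → X → ℝ) (V : X → Y → ℝ) : ℝ :=
  ∑ u, ∑ y, (∑ x, p u x * V x y) *
    Real.log ((∑ x, p u x * V x y) /
      ((∑ x, p u x) * ∑ u', ∑ x, p u' x * V x y))

namespace BinaryBroadcast

open Real

lemma binEnt_eq_binEntropy : binEnt = binEntropy := by
  ext q
  simp [binEnt, binEntropy, log_inv]
  ring

lemma bconv_eq (a b : ℝ) : bconv a b = (1 - 2 * b) * a + b := by unfold bconv; ring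

@[simp] lemma bconv_zero_left (b : ℝ) : bconv 0 b = b := by simp [bconv]

lemma bconv_one_sub_left (a b : ℝ) : bconv (1 - a) b = 1 - bconv a b := by unfold bconv; ring

lemma bconv_assoc (a b c : ℝ) : bconv (bconv a b) c = bconv a (bconv b c) := by unfold bconv; ring

lemma binEntropy_bconv_one_sub_left (a b : ℝ) :
    binEntropy (bconv (1 - a) b) = binEntropy (bconv a b) := by
  rw [bconv_one_sub_left, binEntropy_one_sub]

lemma bconv_mem_Icc {a b : ℝ} (ha : a ∈ Set.Icc 0 1) (hb : b ∈ Set.Icc 0 (1 / 2)) :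
    bconv a b ∈ Set.Icc b (1 - b) := by
  rw [bconv_eq]
  constructor <;> nlinarith [ha.1, ha.2, hb.1, hb.2]

lemma bconv_mem_Icc_zero_one {a b : ℝ} (ha : a ∈ Set.Icc 0 1) (hb : b ∈ Set.Icc 0 (1 / 2)) :
    bconv a b ∈ Set.Icc 0 1 :=
  Set.Icc_subset_Icc hb.1 (by linarith [hb.1]) (bconv_mem_Icc ha hb)

lemma bconv_mem_Icc_half {a b : ℝ} (ha : a ∈ Set.Icc 0 (1 / 2))
    (hb : b ∈ Set.Icc 0 (1 / 2)) :
    bconv a b ∈ Set.Icc a (1 / 2) := by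
  rw [bconv_eq]
  constructor <;> nlinarith [ha.1, ha.2, hb.1, hb.2]

lemma bconv_lt_half {a b : ℝ} (ha : a < 1 / 2) (hb : b < 1 / 2) : bconv a b < 1 / 2 := by
  rw [bconv_eq]
  nlinarith

lemma binEntropy_le_of_mem_Icc {b x : ℝ} (hb : b ∈ Set.Icc 0 (1 / 2))
    (hx : x ∈ Set.Icc b (1 - b)) :
    binEntropy b ≤ binEntropy x := by
  have hb' : b ∈ Set.Icc (0 : ℝ) 2⁻¹ := by norm_num at hb ⊢; exact hb
  rcases le_total x (1 / 2) with h | h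
  · exact binEntropy_strictMonoOn.monotoneOn hb' ⟨hb.1.trans hx.1, by linarith⟩ hx.1
  · rw [← binEntropy_one_sub x]
    exact binEntropy_strictMonoOn.monotoneOn hb' ⟨by linarith [hx.2, hb.1], by linarith⟩
      (by linarith [hx.2])

def bsc (p : ℝ) : Fin 2 → Fin 2 → ℝ := fun x y => if x = y then 1 - p else p

lemma bsc_nonneg {p : ℝ} (hp : p ∈ Set.Icc 0 1) (x y : Fin 2) : 0 ≤ bsc p x y := by
  unfold bsc; split_ifs <;> linarith [hp.1, hp.2]

lemma sum_negMulLog_bsc (p : ℝ) (x : Fin 2) : ∑ y, negMulLog (bsc p x y) = binEntropy p := by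
  fin_cases x <;>
    simp [bsc, Fin.sum_univ_two, binEntropy_eq_negMulLog_add_negMulLog_one_sub, add_comm]

lemma sum_negMulLog_sum_mul_bsc (p : ℝ) {c : Fin 2 → ℝ} (hc : ∑ x, c x = 1) :
    ∑ y, negMulLog (∑ x, c x * bsc p x y) = binEntropy (bconv (c 1) p) := by
  have hc0 : c 0 = 1 - c 1 := by rw [Fin.sum_univ_two] at hc; linarith
  have h0 : ∑ x, c x * bsc p x 0 = 1 - bconv (c 1) p := by
    simp [Fin.sum_univ_two, bsc, bconv, hc0]
    ring
  have h1 : ∑ x, c x * bsc p x 1 = bconv (c 1) p := by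
    simp [Fin.sum_univ_two, bsc, bconv, hc0]
    ring
  rw [Fin.sum_univ_two, h0, h1, binEntropy_eq_negMulLog_add_negMulLog_one_sub, add_comm]

lemma sum_mul_div_sum_self {X : Type*} [Fintype X] {f : X → ℝ} (hf : ∀ x, 0 ≤ f x) (y : X) :
    (∑ x, f x) * (f y / ∑ x, f x) = f y := by
  rcases eq_or_ne (∑ x, f x) 0 with h | h
  · rw [(Finset.sum_eq_zero_iff_of_nonneg fun x _ => hf x).1 h y (Finset.mem_univ y), h]
    simp
  · exact mul_div_cancel₀ _ h

lemma sum_div_sum_self_eq_one {X : Type*} [Fintype X] {f : X → ℝ} (h : ∑ x, f x ≠ 0) :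
    ∑ x, f x / ∑ x', f x' = 1 := by
  rw [← Finset.sum_div, div_self h]

lemma mutInfo_eq_sum_negMulLog_sub {X Z : Type*} [Fintype X] [Fintype Z] {P : X → ℝ}
    {W : X → Z → ℝ} (hP : ∀ x, 0 ≤ P x) (hW : ∀ x z, 0 ≤ W x z) :
    mutInfo P W = ∑ z, negMulLog (∑ x, P x * W x z) - ∑ x, P x * ∑ z, negMulLog (W x z) := by
  have hterm : ∀ x z, P x * W x z * log (W x z / ∑ x', P x' * W x' z) =
      P x * W x z * log (W x z) - P x * W x z * log (∑ x', P x' * W x' z) := by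
    intro x z
    rcases (mul_nonneg (hP x) (hW x z)).eq_or_lt with h | h
    · simp [← h]
    · have hWz : 0 < W x z := pos_of_mul_pos_right h (hP x)
      have hq : 0 < ∑ x', P x' * W x' z :=
        h.trans_le (Finset.single_le_sum (fun x' _ => mul_nonneg (hP x') (hW x' z))
          (Finset.mem_univ x))
      rw [log_div hWz.ne' hq.ne', mul_sub]
  simp only [mutInfo, hterm, Finset.sum_sub_distrib, negMulLog, Finset.mul_sum]
  rw [Finset.sum_comm (f := fun x z => P x * W x z * log (∑ x', P x' * W x' z))]
  simp only [← Finset.sum_mul]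
  simp only [neg_mul, Finset.sum_neg_distrib, mul_neg, mul_assoc]
  ring

-- The channel from `U` to `Y` composes the conditional law of `X` given `U` with `V`.
lemma miUY_eq_mutInfo {U X Y : Type*} [Fintype U] [Fintype X] [Fintype Y] {p : U → X → ℝ}
    (hp : ∀ u x, 0 ≤ p u x) (V : X → Y → ℝ) :
    miUY p V =
      mutInfo (fun u => ∑ x, p u x) (fun u y => ∑ x, p u x / (∑ x', p u x') * V x y) := by
  have hjoint : ∀ u y,
      (∑ x, p u x) * ∑ x, p u x / (∑ x', p u x') * V x y = ∑ x, p u x * V x y := by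
    intro u y
    simp only [Finset.mul_sum, ← mul_assoc, sum_mul_div_sum_self (hp u)]
  unfold mutInfo miUY
  simp only [hjoint]
  refine Finset.sum_congr rfl fun u _ => Finset.sum_congr rfl fun y _ => ?_
  rcases eq_or_ne (∑ x, p u x) 0 with h | h
  · have hu : ∀ x, p u x = 0 := fun x =>
      (Finset.sum_eq_zero_iff_of_nonneg fun x _ => hp u x).1 h x (Finset.mem_univ x)
    simp [hu]
  · simp only [div_mul_eq_mul_div, ← Finset.sum_div, div_div]

lemma mutInfo_bsc {p : ℝ} (hp : p ∈ Set.Icc 0 1) {c : Fin 2 → ℝ} (hc : ∀ x, 0 ≤ c x)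
    (hc1 : ∑ x, c x = 1) :
    mutInfo c (bsc p) = binEntropy (bconv (c 1) p) - binEntropy p := by
  rw [mutInfo_eq_sum_negMulLog_sub hc (bsc_nonneg hp), sum_negMulLog_sum_mul_bsc p hc1]
  simp only [sum_negMulLog_bsc, ← Finset.sum_mul, hc1, one_mul]

section Markov

variable {U : Type*} [Fintype U] {j : U → Fin 2 → ℝ} {p : ℝ}

lemma condMI_bsc (hj : ∀ u x, 0 ≤ j u x) (hj1 : ∑ u, ∑ x, j u x = 1) (hp : p ∈ Set.Icc 0 1) :
    condMI j (bsc p) =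
      ∑ u, (∑ x, j u x) * binEntropy (bconv (j u 1 / ∑ x, j u x) p) - binEntropy p := by
  have hrow : ∀ u, (∑ x, j u x) * mutInfo (fun x => j u x / ∑ x', j u x') (bsc p) =
      (∑ x, j u x) * (binEntropy (bconv (j u 1 / ∑ x, j u x) p) - binEntropy p) := by
    intro u
    rcases eq_or_ne (∑ x, j u x) 0 with h | h
    · simp [h]
    · rw [mutInfo_bsc hp (fun x => div_nonneg (hj u x) (Finset.sum_nonneg fun x _ => hj u x))
        (sum_div_sum_self_eq_one h)]
  simp only [condMI, hrow, mul_sub, Finset.sum_sub_distrib, ← Finset.sum_mul, hj1, one_mul]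

lemma miUY_bsc (hj : ∀ u x, 0 ≤ j u x) (hj1 : ∑ u, ∑ x, j u x = 1) (hp : p ∈ Set.Icc 0 1) :
    miUY j (bsc p) = binEntropy (bconv (∑ u, j u 1) p) -
      ∑ u, (∑ x, j u x) * binEntropy (bconv (j u 1 / ∑ x, j u x) p) := by
  have houtput : ∀ y, ∑ u, (∑ x, j u x) * ∑ x, j u x / (∑ x', j u x') * bsc p x y =
      ∑ x, (∑ u, j u x) * bsc p x y := by
    intro y
    simp only [Finset.mul_sum, ← mul_assoc, sum_mul_div_sum_self (hj _), Finset.sum_mul]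
    exact Finset.sum_comm
  have hrow : ∀ u, (∑ x, j u x) * ∑ y, negMulLog (∑ x, j u x / (∑ x', j u x') * bsc p x y) =
      (∑ x, j u x) * binEntropy (bconv (j u 1 / ∑ x, j u x) p) := by
    intro u
    rcases eq_or_ne (∑ x, j u x) 0 with h | h
    · simp [h]
    · rw [sum_negMulLog_sum_mul_bsc p (sum_div_sum_self_eq_one h)]
  have hmarginal : ∑ x, ∑ u, j u x = 1 := by rw [Finset.sum_comm, hj1]
  have hmarginal_nonneg : ∀ u, 0 ≤ ∑ x, j u x := fun u => Finset.sum_nonneg fun x _ => hj u x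
  rw [miUY_eq_mutInfo hj, mutInfo_eq_sum_negMulLog_sub hmarginal_nonneg fun u y =>
    Finset.sum_nonneg fun x _ => mul_nonneg (div_nonneg (hj u x) (hmarginal_nonneg u))
      (bsc_nonneg hp x y)]
  simp only [houtput, hrow, sum_negMulLog_sum_mul_bsc p hmarginal]

end Markov

-- the derivative of `binEntropy`
noncomputable def negLogit (x : ℝ) : ℝ := log (1 - x) - log x

lemma negLogit_pos {x : ℝ} (hx : x ∈ Set.Ioo 0 (1 / 2)) : 0 < negLogit x :=
  sub_pos.2 (log_lt_log hx.1 (by linarith [hx.2]))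

lemma hasDerivAt_negLogit {x : ℝ} (h0 : x ≠ 0) (h1 : x ≠ 1) :
    HasDerivAt negLogit (-(x * (1 - x))⁻¹) x := by
  have h1' : 1 - x ≠ 0 := sub_ne_zero.2 h1.symm
  refine ((((hasDerivAt_id x).const_sub 1).log h1').sub (hasDerivAt_log h0)).congr_deriv ?_
  simp only [id]
  field_simp
  ring

lemma hasDerivAt_bconv_left (x q : ℝ) : HasDerivAt (fun s => bconv s q) (1 - 2 * q) x := by
  simp only [bconv_eq]
  simpa using ((hasDerivAt_id x).const_mul (1 - 2 * q)).add_const q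

lemma hasDerivAt_binEntropy_bconv {x q : ℝ} (h0 : bconv x q ≠ 0) (h1 : bconv x q ≠ 1) :
    HasDerivAt (fun s => binEntropy (bconv s q)) ((1 - 2 * q) * negLogit (bconv x q)) x :=
  (HasDerivAt.comp (h₂ := binEntropy) x (hasDerivAt_binEntropy h0 h1)
    (hasDerivAt_bconv_left x q)).congr_deriv (mul_comm _ _)

lemma hasDerivAt_mul_one_sub_mul_negLogit {x : ℝ} (h0 : x ≠ 0) (h1 : x ≠ 1) :
    HasDerivAt (fun x => x * (1 - x) * negLogit x) ((1 - 2 * x) * negLogit x - 1) x := by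
  have hpoly : HasDerivAt (fun x : ℝ => x * (1 - x)) (1 - 2 * x) x :=
    ((hasDerivAt_id x).mul ((hasDerivAt_id x).const_sub 1)).congr_deriv (by simp; ring)
  refine (hpoly.mul (hasDerivAt_negLogit h0 h1)).congr_deriv ?_
  have : x * (1 - x) ≠ 0 := mul_ne_zero h0 (sub_ne_zero.2 (Ne.symm h1))
  field_simp
  ring

lemma hasDerivAt_one_sub_two_mul_mul_negLogit {x : ℝ} (h0 : x ≠ 0) (h1 : x ≠ 1) :
    HasDerivAt (fun x => (1 - 2 * x) * negLogit x - 1)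
      (-2 * negLogit x - (1 - 2 * x) * (x * (1 - x))⁻¹) x := by
  have hlin : HasDerivAt (fun x : ℝ => 1 - 2 * x) (-2) x := by
    simpa using ((hasDerivAt_id x).const_mul 2).const_sub 1
  exact ((hlin.mul (hasDerivAt_negLogit h0 h1)).sub_const 1).congr_deriv (by ring)

lemma concaveOn_mul_one_sub_mul_negLogit :
    ConcaveOn ℝ (Set.Ioc 0 (1 / 2)) fun x => x * (1 - x) * negLogit x := by
  have hne {x : ℝ} (hx : x ∈ Set.Ioc (0 : ℝ) (1 / 2)) : x ≠ 0 ∧ x ≠ 1 :=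
    ⟨hx.1.ne', by linarith [hx.2]⟩
  refine concaveOn_of_hasDerivWithinAt2_nonpos (convex_Ioc 0 _)
    (f' := fun x => (1 - 2 * x) * negLogit x - 1)
    (f'' := fun x => -2 * negLogit x - (1 - 2 * x) * (x * (1 - x))⁻¹)
    (fun x hx => (hasDerivAt_mul_one_sub_mul_negLogit (hne hx).1 (hne hx).2).continuousAt
      |>.continuousWithinAt) ?_ ?_ ?_ <;> rw [interior_Ioc] <;> intro x hx
  · exact (hasDerivAt_mul_one_sub_mul_negLogit (hne (Set.Ioo_subset_Ioc_self hx)).1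
      (hne (Set.Ioo_subset_Ioc_self hx)).2).hasDerivWithinAt
  · exact (hasDerivAt_one_sub_two_mul_mul_negLogit (hne (Set.Ioo_subset_Ioc_self hx)).1
      (hne (Set.Ioo_subset_Ioc_self hx)).2).hasDerivWithinAt
  · have : 0 ≤ (1 - 2 * x) * (x * (1 - x))⁻¹ :=
      mul_nonneg (by linarith [hx.2]) (inv_nonneg.2 (mul_nonneg hx.1.le (by linarith [hx.2])))
    linarith [negLogit_pos hx]

-- Concavity between `s` and `1/2`, where the function vanishes: `s ∗ q = (1 - 2q) s + 2q · (1/2)`.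
lemma one_sub_two_mul_mul_negLogit_le {s q : ℝ} (hs : s ∈ Set.Ioc 0 (1 / 2))
    (hq : q ∈ Set.Icc 0 (1 / 2)) :
    (1 - 2 * q) * (s * (1 - s) * negLogit s) ≤
      bconv s q * (1 - bconv s q) * negLogit (bconv s q) := by
  have hhalf : (1 / 2 : ℝ) ∈ Set.Ioc 0 (1 / 2) := by norm_num
  have h := concaveOn_mul_one_sub_mul_negLogit.2 hs hhalf (by linarith [hq.2] : 0 ≤ 1 - 2 * q)
    (by linarith [hq.1] : 0 ≤ 2 * q) (by ring)
  have hmid : (1 - 2 * q) • s + (2 * q) • (1 / 2 : ℝ) = bconv s q := by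
    rw [bconv_eq, smul_eq_mul, smul_eq_mul]; ring
  rw [hmid] at h
  norm_num [negLogit] at h ⊢
  linarith

lemma monotoneOn_negLogit_bconv_div_negLogit {q : ℝ} (hq : q ∈ Set.Icc 0 (1 / 2)) :
    MonotoneOn (fun s => negLogit (bconv s q) / negLogit s) (Set.Ioo 0 (1 / 2)) := by
  have hderiv : ∀ x ∈ Set.Ioo (0 : ℝ) (1 / 2),
      HasDerivAt (fun s => negLogit (bconv s q) / negLogit s)
        ((bconv x q * (1 - bconv x q) * negLogit (bconv x q) -
            (1 - 2 * q) * (x * (1 - x) * negLogit x)) /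
          (x * (1 - x) * (bconv x q * (1 - bconv x q)) * negLogit x ^ 2)) x := by
    intro x hx
    have hm := bconv_mem_Icc_half ⟨hx.1.le, hx.2.le⟩ hq
    have hm0 : bconv x q ≠ 0 := (hx.1.trans_le hm.1).ne'
    have hm1 : 1 - bconv x q ≠ 0 := by linarith [hm.2]
    have hx0 : x ≠ 0 := hx.1.ne'
    have hx1 : 1 - x ≠ 0 := by linarith [hx.2]
    have hL := (negLogit_pos hx).ne'
    have hnum := (hasDerivAt_negLogit hm0 (by linarith [hm.2])).comp x (hasDerivAt_bconv_left x q)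
    refine (hnum.div (hasDerivAt_negLogit hx0 (by linarith [hx.2])) hL).congr_deriv ?_
    simp only [Function.comp_apply]
    field_simp
    ring
  refine monotoneOn_of_hasDerivWithinAt_nonneg (convex_Ioo 0 _)
    (fun x hx => (hderiv x hx).continuousAt.continuousWithinAt)
    (fun x hx => (hderiv x (interior_subset hx)).hasDerivWithinAt) ?_
  rw [interior_Ioo]
  intro x hx
  have hm := bconv_mem_Icc_half ⟨hx.1.le, hx.2.le⟩ hq
  refine div_nonneg (sub_nonneg.2 (one_sub_two_mul_mul_negLogit_le ⟨hx.1, hx.2.le⟩ hq)) ?_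
  have : 0 ≤ bconv x q * (1 - bconv x q) := mul_nonneg (hx.1.le.trans hm.1) (by linarith [hm.2])
  have : 0 ≤ x * (1 - x) := mul_nonneg hx.1.le (by linarith [hx.2])
  positivity

lemma isMinOn_binEntropy_bconv_sub_mul_of_le_half {q σ : ℝ} (hq : q ∈ Set.Icc 0 (1 / 2))
    (hσ : σ ∈ Set.Ioo 0 (1 / 2)) :
    IsMinOn (fun s => binEntropy (bconv s q) -
      (1 - 2 * q) * (negLogit (bconv σ q) / negLogit σ) * binEntropy s)
      (Set.Icc 0 (1 / 2)) σ := by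
  set φ := fun s => negLogit (bconv s q) / negLogit s
  have hφ := monotoneOn_negLogit_bconv_div_negLogit hq
  have hderiv : ∀ x ∈ Set.Ioo (0 : ℝ) (1 / 2), HasDerivAt
      (fun s => binEntropy (bconv s q) - (1 - 2 * q) * φ σ * binEntropy s)
      ((1 - 2 * q) * negLogit x * (φ x - φ σ)) x := by
    intro x hx
    have hm := bconv_mem_Icc_half ⟨hx.1.le, hx.2.le⟩ hq
    refine ((hasDerivAt_binEntropy_bconv (hx.1.trans_le hm.1).ne' (by linarith [hm.2])).sub
      ((hasDerivAt_binEntropy hx.1.ne' (by linarith [hx.2])).const_mul _)).congr_deriv ?_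
    have := (negLogit_pos hx).ne'
    rw [show log (1 - x) - log x = negLogit x from rfl]
    simp only [φ]
    field_simp
  have hcont : ContinuousOn (fun s => binEntropy (bconv s q) - (1 - 2 * q) * φ σ * binEntropy s)
      (Set.Icc 0 (1 / 2)) := by
    unfold bconv
    fun_prop
  have hq' : 0 ≤ 1 - 2 * q := by linarith [hq.2]
  have hanti := antitoneOn_of_hasDerivWithinAt_nonpos (convex_Icc 0 σ)
    (hcont.mono (Set.Icc_subset_Icc_right hσ.2.le))
    (fun x hx => (hderiv x (by rw [interior_Icc] at hx; exact ⟨hx.1, hx.2.trans hσ.2⟩)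
      |>.hasDerivWithinAt))
    (by
      rw [interior_Icc]
      intro x hx
      have hx' : x ∈ Set.Ioo (0 : ℝ) (1 / 2) := ⟨hx.1, hx.2.trans hσ.2⟩
      exact mul_nonpos_of_nonneg_of_nonpos (mul_nonneg hq' (negLogit_pos hx').le)
        (sub_nonpos.2 (hφ hx' hσ hx.2.le)))
  have hmono := monotoneOn_of_hasDerivWithinAt_nonneg (convex_Icc σ (1 / 2))
    (hcont.mono (Set.Icc_subset_Icc_left hσ.1.le))
    (fun x hx => (hderiv x (by rw [interior_Icc] at hx; exact ⟨hσ.1.trans hx.1, hx.2⟩)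
      |>.hasDerivWithinAt))
    (by
      rw [interior_Icc]
      intro x hx
      have hx' : x ∈ Set.Ioo (0 : ℝ) (1 / 2) := ⟨hσ.1.trans hx.1, hx.2⟩
      exact mul_nonneg (mul_nonneg hq' (negLogit_pos hx').le) (sub_nonneg.2 (hφ hσ hx' hx.1.le)))
  intro s hs
  rcases le_total s σ with h | h
  · exact hanti ⟨hs.1, h⟩ ⟨hσ.1.le, le_rfl⟩ h
  · exact hmono ⟨le_rfl, hσ.2.le⟩ ⟨h, hs.2⟩ h

lemma isMinOn_binEntropy_bconv_sub_mul {q σ : ℝ} (hq : q ∈ Set.Icc 0 (1 / 2))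
    (hσ : σ ∈ Set.Ioo 0 (1 / 2)) :
    IsMinOn (fun s => binEntropy (bconv s q) -
      (1 - 2 * q) * (negLogit (bconv σ q) / negLogit σ) * binEntropy s) (Set.Icc 0 1) σ := by
  have hhalf := isMinOn_iff.1 (isMinOn_binEntropy_bconv_sub_mul_of_le_half hq hσ)
  refine isMinOn_iff.2 fun s hs => ?_
  rcases le_total s (1 / 2) with h | h
  · exact hhalf s ⟨hs.1, h⟩
  · simpa only [binEntropy_bconv_one_sub_left, binEntropy_one_sub] using
      hhalf (1 - s) ⟨by linarith [hs.2], by linarith⟩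

section Average

variable {ι : Type*} [Fintype ι] {P s : ι → ℝ} {q : ℝ}

lemma sum_mul_binEntropy_le_of_le_half (hq : q ∈ Set.Ico 0 (1 / 2)) {σ : ℝ}
    (hσ : σ ∈ Set.Ioc 0 (1 / 2)) (hP : ∀ i, 0 ≤ P i) (hP1 : ∑ i, P i = 1)
    (hs : ∀ i, s i ∈ Set.Icc 0 1)
    (h : ∑ i, P i * binEntropy (bconv (s i) q) ≤ binEntropy (bconv σ q)) :
    ∑ i, P i * binEntropy (s i) ≤ binEntropy σ := by
  rcases hσ.2.eq_or_lt with rfl | hσ2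
  · calc ∑ i, P i * binEntropy (s i) ≤ ∑ i, P i * log 2 :=
          Finset.sum_le_sum fun i _ => mul_le_mul_of_nonneg_left binEntropy_le_log_two (hP i)
      _ = binEntropy (1 / 2) := by
          rw [← Finset.sum_mul, hP1, one_mul, one_div, binEntropy_two_inv]
  set c := (1 - 2 * q) * (negLogit (bconv σ q) / negLogit σ)
  have hσ' : σ ∈ Set.Ioo 0 (1 / 2) := ⟨hσ.1, hσ2⟩
  have hm := bconv_mem_Icc_half ⟨hσ.1.le, hσ.2⟩ ⟨hq.1, hq.2.le⟩
  have hc : 0 < c := mul_pos (by linarith [hq.2])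
    (div_pos (negLogit_pos ⟨hσ.1.trans_le hm.1, bconv_lt_half hσ2 hq.2⟩) (negLogit_pos hσ'))
  have htangent := isMinOn_iff.1 (isMinOn_binEntropy_bconv_sub_mul ⟨hq.1, hq.2.le⟩ hσ')
  have hsum : binEntropy (bconv σ q) - c * binEntropy σ ≤
      ∑ i, P i * binEntropy (bconv (s i) q) - c * ∑ i, P i * binEntropy (s i) :=
    calc binEntropy (bconv σ q) - c * binEntropy σ
        = ∑ i, P i * (binEntropy (bconv σ q) - c * binEntropy σ) := by
          rw [← Finset.sum_mul, hP1, one_mul]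
      _ ≤ ∑ i, P i * (binEntropy (bconv (s i) q) - c * binEntropy (s i)) :=
          Finset.sum_le_sum fun i _ => mul_le_mul_of_nonneg_left (htangent (s i) (hs i)) (hP i)
      _ = _ := by simp only [mul_sub, Finset.sum_sub_distrib, Finset.mul_sum, mul_left_comm c]
  exact le_of_mul_le_mul_left (by linarith) hc

theorem sum_mul_binEntropy_le_of_sum_mul_binEntropy_bconv_le (hq : q ∈ Set.Ico 0 (1 / 2))
    {σ : ℝ} (hσ : σ ∈ Set.Ioo 0 1) (hP : ∀ i, 0 ≤ P i) (hP1 : ∑ i, P i = 1)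
    (hs : ∀ i, s i ∈ Set.Icc 0 1)
    (h : ∑ i, P i * binEntropy (bconv (s i) q) ≤ binEntropy (bconv σ q)) :
    ∑ i, P i * binEntropy (s i) ≤ binEntropy σ := by
  rcases le_total σ (1 / 2) with hσ2 | hσ2
  · exact sum_mul_binEntropy_le_of_le_half hq ⟨hσ.1, hσ2⟩ hP hP1 hs h
  · rw [← binEntropy_one_sub]
    rw [← binEntropy_bconv_one_sub_left] at h
    exact sum_mul_binEntropy_le_of_le_half hq ⟨by linarith [hσ.2], by linarith⟩ hP hP1 hs h

lemma exists_binEntropy_bconv_eq_sum_mul {γ : ι → ℝ} {p : ℝ} (hp : p ∈ Set.Icc 0 (1 / 2))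
    (hP : ∀ i, 0 ≤ P i) (hP1 : ∑ i, P i = 1) (hγ : ∀ i, γ i ∈ Set.Icc 0 1) :
    ∃ τ ∈ Set.Icc 0 (∑ i, P i * γ i),
      binEntropy (bconv τ p) = ∑ i, P i * binEntropy (bconv (γ i) p) := by
  have hmem : ∀ i, bconv (γ i) p ∈ Set.Icc p (1 - p) := fun i => bconv_mem_Icc (hγ i) hp
  have hlower : binEntropy (bconv 0 p) ≤ ∑ i, P i * binEntropy (bconv (γ i) p) :=
    calc binEntropy (bconv 0 p) = ∑ i, P i * binEntropy p := by
          rw [bconv_zero_left, ← Finset.sum_mul, hP1, one_mul]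
      _ ≤ _ := Finset.sum_le_sum fun i _ => mul_le_mul_of_nonneg_left
          (binEntropy_le_of_mem_Icc hp (hmem i)) (hP i)
  have hupper :
      ∑ i, P i * binEntropy (bconv (γ i) p) ≤ binEntropy (bconv (∑ i, P i * γ i) p) := by
    have hjensen := strictConcave_binEntropy.concaveOn.le_map_sum (fun i _ => hP i) hP1
      fun i _ => bconv_mem_Icc_zero_one (hγ i) hp
    have haffine : ∑ i, P i * bconv (γ i) p = bconv (∑ i, P i * γ i) p := by
      simp only [bconv_eq, mul_add, Finset.sum_add_distrib, ← Finset.sum_mul, hP1, one_mul,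
        mul_left_comm (P _) (1 - 2 * p), ← Finset.mul_sum]
    simpa only [smul_eq_mul, haffine] using hjensen
  have hcont : Continuous fun t => binEntropy (bconv t p) := by
    unfold bconv
    fun_prop
  exact intermediate_value_Icc (Finset.sum_nonneg fun i _ => mul_nonneg (hP i) (hγ i).1)
    hcont.continuousOn ⟨hlower, hupper⟩

end Average

end BinaryBroadcast

open BinaryBroadcast in
theorem stmt12_general {U : Type*} [Fintype U] (p1 pt2 α : ℝ)
    (hp1 : p1 ∈ Set.Ioo (0 : ℝ) (1 / 2)) (hpt2 : pt2 ∈ Set.Ioo (0 : ℝ) (1 / 2))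
    (j : U → Fin 2 → ℝ) (hjnn : ∀ u x, 0 ≤ j u x) (hjsum : ∑ u, ∑ x, j u x = 1)
    (hα : ∑ u, j u 1 = α)
    (W1 W2 : Fin 2 → Fin 2 → ℝ)
    (hW1 : W1 = fun x y => if x = y then 1 - p1 else p1)
    (hW2 : W2 = fun x y => if x = y then 1 - bconv p1 pt2 else bconv p1 pt2) :
    ∃ τ ∈ Set.Icc (0 : ℝ) α,
      condMI j W1 ≤ binEnt (bconv τ p1) - binEnt p1 ∧
      miUY j W2 ≤ binEnt (bconv α (bconv p1 pt2)) - binEnt (bconv τ (bconv p1 pt2)) := by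
  have hp1' : p1 ∈ Set.Icc 0 (1 / 2) := ⟨hp1.1.le, hp1.2.le⟩
  have hp2 : bconv p1 pt2 ∈ Set.Icc 0 (1 / 2) :=
    Set.Icc_subset_Icc_left hp1.1.le (bconv_mem_Icc_half hp1' ⟨hpt2.1.le, hpt2.2.le⟩)
  have hhalf : Set.Icc (0 : ℝ) (1 / 2) ⊆ Set.Icc 0 1 := Set.Icc_subset_Icc_right (by norm_num)
  rw [binEnt_eq_binEntropy, show W1 = bsc p1 from hW1, show W2 = bsc (bconv p1 pt2) from hW2,
    condMI_bsc hjnn hjsum (hhalf hp1'), miUY_bsc hjnn hjsum (hhalf hp2), hα]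
  set P : U → ℝ := fun u => ∑ x, j u x
  set γ : U → ℝ := fun u => j u 1 / P u
  have hP : ∀ u, 0 ≤ P u := fun u => Finset.sum_nonneg fun x _ => hjnn u x
  have hj1 : ∀ u, j u 1 ≤ P u := fun u =>
    Finset.single_le_sum (fun x _ => hjnn u x) (Finset.mem_univ 1)
  have hγ : ∀ u, γ u ∈ Set.Icc 0 1 := fun u =>
    ⟨div_nonneg (hjnn u 1) (hP u), div_le_one_of_le₀ (hj1 u) (hP u)⟩
  have hPγ : ∑ u, P u * γ u = α := by simpa only [P, γ, sum_mul_div_sum_self (hjnn _)] using hα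
  have hα1 : α ≤ 1 := hα ▸ hjsum ▸ Finset.sum_le_sum fun u _ => hj1 u
  obtain ⟨τ, hτ, hτB⟩ := exists_binEntropy_bconv_eq_sum_mul hp2 hP hjsum hγ
  rw [hPγ] at hτ
  refine ⟨τ, hτ, ?_, by linarith⟩
  have hσ : bconv τ p1 ∈ Set.Ioo 0 1 := Set.Icc_subset_Ioo hp1.1 (by linarith [hp1.1])
    (bconv_mem_Icc ⟨hτ.1, hτ.2.trans hα1⟩ hp1')
  have hgerber := sum_mul_binEntropy_le_of_sum_mul_binEntropy_bconv_le
    (s := fun u => bconv (γ u) p1) ⟨hpt2.1.le, hpt2.2⟩ hσ hP hjsum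
    (fun u => bconv_mem_Icc_zero_one (hγ u) hp1') (by simp only [bconv_assoc]; exact hτB.ge)
  linarith

/-- for the degraded binary symmetric broadcast chain
`U → X → Y₁ → Y₂` with `Y₁ = X ⊕ Ψ₁`, `Ψ₁ ~ Bern(p₁)`, `Y₂ = Y₁ ⊕ Ψ̃₂`,
`Ψ̃₂ ~ Bern(p̃₂)`, `p₂ := p₁ ∗ p̃₂`, and `E[X] = α`, there exists `τ ∈ [0,α]` with
`I(X;Y₁|U) ≤ h_b(τ∗p₁) − h_b(p₁)` and `I(U;Y₂) ≤ h_b(α∗p₂) − h_b(τ∗p₂)`. -/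
theorem stmt12 {U : Type*} [Fintype U] [Nonempty U] (p1 pt2 α : ℝ)
    (hp1 : p1 ∈ Set.Ioo (0 : ℝ) (1 / 2)) (hpt2 : pt2 ∈ Set.Ioo (0 : ℝ) (1 / 2))
    (j : U → Fin 2 → ℝ) (hjnn : ∀ u x, 0 ≤ j u x) (hjsum : ∑ u, ∑ x, j u x = 1)
    (hα : ∑ u, j u 1 = α)
    (W1 W2 : Fin 2 → Fin 2 → ℝ)
    (hW1 : W1 = fun x y => if x = y then 1 - p1 else p1)
    (hW2 : W2 = fun x y => if x = y then 1 - bconv p1 pt2 else bconv p1 pt2) :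
    ∃ τ ∈ Set.Icc (0 : ℝ) α,
      condMI j W1 ≤ binEnt (bconv τ p1) - binEnt p1 ∧
      miUY j W2 ≤ binEnt (bconv α (bconv p1 pt2)) - binEnt (bconv τ (bconv p1 pt2)) :=
  stmt12_general p1 pt2 α hp1 hpt2 j hjnn hjsum hα W1 W2 hW1 hW2
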